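/- Let L, n, M be positive integers with n < L, L ≥ 2, M ≥ 1, let Ω ⊆ Z_L with |Ω| = n, and let C_0,…,C_{M-1} be length-L complex sequences whose unitary DFTs all satisfy |(Ĉ_i)_f|² = L/(L−n) for f ∉ Ω and (Ĉ_i)_f = 0 for f ∈ Ω. Let θ_a = max{|θ_{C_i}(τ)| : 0 ≤ i < M, 0 < τ < L} and θ_c = max{|θ_{C_i,C_j}(τ)| : 0 ≤ i ≠ j < M, 0 ≤ τ < L} (θ_c taken as 0 when M = 1). Then θ_a²·(L−1) + θ_c²·(M−1)·L ≥ L²(ML − L + n)/(L − n). -/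

import Mathlib

/-- Periodic cross-correlation of two length-`L` complex sequences. -/
noncomputable def pcc (L : ℕ) (c d : ℕ → ℂ) (τ : ℕ) : ℂ :=
  ∑ t ∈ Finset.range L, c t * (starRingEnd ℂ) (d ((t + τ) % L))

/-- Unitary DFT of a length-`L` complex sequence. -/
noncomputable def udft (L : ℕ) (c : ℕ → ℂ) (f : ℕ) : ℂ :=
  ((Real.sqrt L : ℝ) : ℂ)⁻¹ * ∑ t ∈ Finset.range L,
    c t * Complex.exp (-(2 * (Real.pi : ℂ) * Complex.I * (t : ℂ) * (f : ℂ)) / (L : ℂ))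

open Finset

noncomputable def zet (L : ℕ) : ℂ := Complex.exp (2 * Real.pi * Complex.I / L)
noncomputable def xii (L : ℕ) : ℂ := Complex.exp (-(2 * Real.pi * Complex.I) / L)

lemma xii_mul_zet (L : ℕ) : xii L * zet L = 1 := by
  rw [xii, zet, ← Complex.exp_add]
  rw [show -(2 * (Real.pi:ℂ) * Complex.I) / L + 2 * Real.pi * Complex.I / L = 0 by ring]
  exact Complex.exp_zero

lemma conj_xii (L : ℕ) : (starRingEnd ℂ) (xii L) = zet L := by
  rw [xii, zet, ← Complex.exp_conj]
  congr 1
  simp [map_div₀, Complex.conj_I, map_ofNat]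

lemma conj_zet (L : ℕ) : (starRingEnd ℂ) (zet L) = xii L := by
  rw [← conj_xii L, Complex.conj_conj]

lemma zet_pow_L {L : ℕ} (hL : 0 < L) : zet L ^ L = 1 :=
  (Complex.isPrimitiveRoot_exp L hL.ne').pow_eq_one

lemma xii_pow_L {L : ℕ} (hL : 0 < L) : xii L ^ L = 1 := by
  have h := zet_pow_L hL
  have h2 : xii L ^ L * zet L ^ L = 1 := by rw [← mul_pow, xii_mul_zet, one_pow]
  rw [h, mul_one] at h2; exact h2

lemma xii_pow_congr {L : ℕ} (hL : 0 < L) {a b : ℕ} (h : a % L = b % L) :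
    xii L ^ a = xii L ^ b := by
  rw [pow_eq_pow_mod a (xii_pow_L hL), pow_eq_pow_mod b (xii_pow_L hL), h]

lemma orth {L : ℕ} (hL : 0 < L) {a b : ℕ} (ha : a < L) (hb : b < L) :
    ∑ f ∈ range L, (xii L ^ a * zet L ^ b) ^ f = if a = b then (L : ℂ) else 0 := by
  by_cases h : a = b
  · subst h
    rw [if_pos rfl]
    have : xii L ^ a * zet L ^ a = 1 := by rw [← mul_pow, xii_mul_zet, one_pow]
    simp [this]
  · rw [if_neg h]
    have hw1 : (xii L ^ a * zet L ^ b) ^ L = 1 := by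
      rw [mul_pow, ← pow_mul, ← pow_mul, mul_comm a L, mul_comm b L, pow_mul, pow_mul,
        xii_pow_L hL, zet_pow_L hL, one_pow, one_pow, mul_one]
    have hw : xii L ^ a * zet L ^ b ≠ 1 := by
      intro hcon
      apply h
      have hz : zet L ^ a = zet L ^ b := by
        have h1 : xii L ^ a * zet L ^ a = 1 := by rw [← mul_pow, xii_mul_zet, one_pow]
        calc zet L ^ a = (xii L ^ a * zet L ^ b) * zet L ^ a := by rw [hcon, one_mul]
          _ = (xii L ^ a * zet L ^ a) * zet L ^ b := by ring
          _ = zet L ^ b := by rw [h1, one_mul]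
      exact (Complex.isPrimitiveRoot_exp L hL.ne').pow_inj ha hb hz
    rw [geom_sum_eq hw, hw1]
    simp

lemma udft_eq (L : ℕ) (c : ℕ → ℂ) (f : ℕ) :
    udft L c f = ((Real.sqrt L : ℝ) : ℂ)⁻¹ * ∑ t ∈ range L, c t * xii L ^ (t * f) := by
  unfold udft
  congr 1
  refine Finset.sum_congr rfl fun t _ => ?_
  congr 1
  rw [xii, ← Complex.exp_nat_mul]
  congr 1
  push_cast
  ring

lemma sqrt_inv_sq (L : ℕ) (hL : 0 < L) :
    (((Real.sqrt L : ℝ) : ℂ))⁻¹ * (((Real.sqrt L : ℝ) : ℂ))⁻¹ = ((L : ℂ))⁻¹ := by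
  rw [← mul_inv]
  congr 1
  rw [← Complex.ofReal_mul, Real.mul_self_sqrt (Nat.cast_nonneg L)]
  norm_cast

lemma parseval {L : ℕ} (hL : 0 < L) (c d : ℕ → ℂ) :
    ∑ f ∈ range L, udft L c f * (starRingEnd ℂ) (udft L d f)
      = ∑ t ∈ range L, c t * (starRingEnd ℂ) (d t) := by
  have hstep : ∀ f ∈ range L,
      udft L c f * (starRingEnd ℂ) (udft L d f)
        = (L : ℂ)⁻¹ * ∑ t ∈ range L, ∑ s ∈ range L,
            (c t * (starRingEnd ℂ) (d s)) * (xii L ^ t * zet L ^ s) ^ f := by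
    intro f _
    rw [udft_eq, udft_eq, map_mul, map_inv₀, Complex.conj_ofReal, map_sum]
    have hconj : ∀ s : ℕ, (starRingEnd ℂ) (d s * xii L ^ (s * f))
        = (starRingEnd ℂ) (d s) * zet L ^ (s * f) := by
      intro s
      rw [map_mul, map_pow, conj_xii]
    simp only [hconj]
    rw [show (((Real.sqrt L : ℝ) : ℂ)⁻¹ * ∑ t ∈ range L, c t * xii L ^ (t * f)) *
        (((Real.sqrt L : ℝ) : ℂ)⁻¹ * ∑ s ∈ range L, (starRingEnd ℂ) (d s) * zet L ^ (s * f))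
        = (((Real.sqrt L : ℝ) : ℂ)⁻¹ * ((Real.sqrt L : ℝ) : ℂ)⁻¹) *
          ((∑ t ∈ range L, c t * xii L ^ (t * f)) *
           (∑ s ∈ range L, (starRingEnd ℂ) (d s) * zet L ^ (s * f))) by ring,
      sqrt_inv_sq L hL]
    congr 1
    rw [Finset.sum_mul_sum]
    refine Finset.sum_congr rfl fun t _ => Finset.sum_congr rfl fun s _ => ?_
    rw [mul_pow, ← pow_mul, ← pow_mul]
    ring
  rw [Finset.sum_congr rfl hstep, ← Finset.mul_sum, Finset.sum_comm]
  have hinner : ∀ t ∈ range L, ∑ f ∈ range L, ∑ s ∈ range L,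
      (c t * (starRingEnd ℂ) (d s)) * (xii L ^ t * zet L ^ s) ^ f
      = (L : ℂ) * (c t * (starRingEnd ℂ) (d t)) := by
    intro t ht
    rw [Finset.sum_comm]
    have h1 : ∀ s ∈ range L, ∑ f ∈ range L,
        (c t * (starRingEnd ℂ) (d s)) * (xii L ^ t * zet L ^ s) ^ f
        = (c t * (starRingEnd ℂ) (d s)) * (if t = s then (L : ℂ) else 0) := by
      intro s hs
      rw [← Finset.mul_sum, orth hL (mem_range.1 ht) (mem_range.1 hs)]
    rw [Finset.sum_congr rfl h1]
    rw [Finset.sum_eq_single_of_mem t ht]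
    · rw [if_pos rfl]; ring
    · intro b _ hbt
      rw [if_neg (fun h => hbt h.symm), mul_zero]
  rw [Finset.sum_congr rfl hinner, ← Finset.mul_sum, ← mul_assoc,
    inv_mul_cancel₀ (by exact_mod_cast hL.ne' : (L:ℂ) ≠ 0), one_mul]

lemma udft_shift {L : ℕ} (hL : 0 < L) (d : ℕ → ℂ) (τ f : ℕ) :
    udft L (fun t => d ((t + τ) % L)) f = zet L ^ (τ * f) * udft L d f := by
  rw [udft_eq, udft_eq]
  have hzx : zet L ^ (τ * f) * xii L ^ (τ * f) = 1 := by
    rw [← mul_pow, mul_comm, xii_mul_zet, one_pow]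
  have hterm : ∀ t ∈ range L,
      d ((t + τ) % L) * xii L ^ (t * f)
        = zet L ^ (τ * f) * (d ((t + τ) % L) * xii L ^ (((t + τ) % L) * f)) := by
    intro t _
    have hcong : xii L ^ (((t + τ) % L) * f) = xii L ^ ((t + τ) * f) := by
      refine xii_pow_congr hL ?_
      conv_lhs => rw [Nat.mul_mod, Nat.mod_mod_of_dvd _ dvd_rfl]
      conv_rhs => rw [Nat.mul_mod]
    rw [hcong, show (t + τ) * f = t * f + τ * f by ring, pow_add]
    linear_combination (-(d ((t + τ) % L) * xii L ^ (t * f))) * hzx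
  rw [Finset.sum_congr rfl hterm, ← Finset.mul_sum]
  have hre : ∑ t ∈ range L, d ((t + τ) % L) * xii L ^ (((t + τ) % L) * f)
      = ∑ s ∈ range L, d s * xii L ^ (s * f) := by
    have hq := Nat.div_add_mod τ L
    have hr : τ % L < L := Nat.mod_lt _ hL
    refine Finset.sum_nbij' (fun t => (t + τ) % L) (fun s => (s + (L - τ % L)) % L)
      (fun a _ => mem_range.2 (Nat.mod_lt _ hL)) (fun a _ => mem_range.2 (Nat.mod_lt _ hL))
      ?_ ?_ (fun a _ => rfl)
    · intro a ha
      rw [Nat.mod_add_mod, show a + τ + (L - τ % L) = a + L * (τ / L) + L by omega,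
        Nat.add_mod_right, Nat.add_mul_mod_self_left, Nat.mod_eq_of_lt (mem_range.1 ha)]
    · intro a ha
      rw [Nat.mod_add_mod, show a + (L - τ % L) + τ = a + L * (τ / L) + L by omega,
        Nat.add_mod_right, Nat.add_mul_mod_self_left, Nat.mod_eq_of_lt (mem_range.1 ha)]
  rw [hre]
  ring

lemma pcc_eq {L : ℕ} (hL : 0 < L) (c d : ℕ → ℂ) (τ : ℕ) :
    pcc L c d τ = ∑ f ∈ range L,
      (udft L c f * (starRingEnd ℂ) (udft L d f)) * xii L ^ (τ * f) := by
  have h := (parseval hL c (fun t => d ((t + τ) % L))).symm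
  rw [pcc]
  rw [show (∑ t ∈ Finset.range L, c t * (starRingEnd ℂ) (d ((t + τ) % L)))
      = ∑ t ∈ range L, c t * (starRingEnd ℂ) ((fun t => d ((t + τ) % L)) t) from rfl, h]
  refine Finset.sum_congr rfl fun f _ => ?_
  rw [udft_shift hL d τ f, map_mul, map_pow, conj_zet]
  ring

lemma sum_pcc {L : ℕ} (hL : 0 < L) (c d : ℕ → ℂ) :
    ∑ τ ∈ range L, pcc L c d τ * (starRingEnd ℂ) (pcc L c d τ)
      = (L : ℂ) * ∑ f ∈ range L,
          (udft L c f * (starRingEnd ℂ) (udft L c f)) *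
          (udft L d f * (starRingEnd ℂ) (udft L d f)) := by
  set A : ℕ → ℂ := fun f => udft L c f * (starRingEnd ℂ) (udft L d f) with hA
  have hstep : ∀ τ ∈ range L,
      pcc L c d τ * (starRingEnd ℂ) (pcc L c d τ)
        = ∑ f ∈ range L, ∑ g ∈ range L,
            (A f * (starRingEnd ℂ) (A g)) * (xii L ^ f * zet L ^ g) ^ τ := by
    intro τ _
    rw [pcc_eq hL c d τ, map_sum]
    have hconj : ∀ g : ℕ, (starRingEnd ℂ) (A g * xii L ^ (τ * g))
        = (starRingEnd ℂ) (A g) * zet L ^ (τ * g) := fun g => by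
      rw [map_mul, map_pow, conj_xii]
    simp only [hA] at hconj ⊢
    simp only [hconj]
    rw [Finset.sum_mul_sum]
    refine Finset.sum_congr rfl fun f _ => Finset.sum_congr rfl fun g _ => ?_
    rw [mul_pow, ← pow_mul', ← pow_mul']
    ring
  rw [Finset.sum_congr rfl hstep, Finset.sum_comm]
  have hinner : ∀ f ∈ range L, ∑ τ ∈ range L, ∑ g ∈ range L,
      (A f * (starRingEnd ℂ) (A g)) * (xii L ^ f * zet L ^ g) ^ τ
      = (L : ℂ) * (A f * (starRingEnd ℂ) (A f)) := by
    intro f hf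
    rw [Finset.sum_comm]
    have h1 : ∀ g ∈ range L, ∑ τ ∈ range L,
        (A f * (starRingEnd ℂ) (A g)) * (xii L ^ f * zet L ^ g) ^ τ
        = (A f * (starRingEnd ℂ) (A g)) * (if f = g then (L : ℂ) else 0) := by
      intro g hg
      rw [← Finset.mul_sum, orth hL (mem_range.1 hf) (mem_range.1 hg)]
    rw [Finset.sum_congr rfl h1, Finset.sum_eq_single_of_mem f hf]
    · rw [if_pos rfl]; ring
    · intro b _ hbf
      rw [if_neg (fun h => hbf h.symm), mul_zero]
  rw [Finset.sum_congr rfl hinner, ← Finset.mul_sum]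
  congr 1
  refine Finset.sum_congr rfl fun f _ => ?_
  rw [hA]
  simp only [map_mul, Complex.conj_conj]
  ring

lemma sum_norm_pcc {L : ℕ} (hL : 0 < L) (c d : ℕ → ℂ) :
    ∑ τ ∈ range L, ‖pcc L c d τ‖ ^ 2
      = (L : ℝ) * ∑ f ∈ range L, ‖udft L c f‖ ^ 2 * ‖udft L d f‖ ^ 2 := by
  have h := sum_pcc hL c d
  simp only [Complex.mul_conj'] at h
  exact_mod_cast h

lemma pcc_self_zero {L : ℕ} (hL : 0 < L) (c : ℕ → ℂ) :
    pcc L c c 0 = ((∑ f ∈ range L, ‖udft L c f‖ ^ 2 : ℝ) : ℂ) := by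
  rw [pcc_eq hL c c 0]
  simp only [Complex.mul_conj', zero_mul, pow_zero, mul_one]
  push_cast
  rfl

/-- Maximum autocorrelation sidelobe magnitude `θ_a` of a family of `M` sequences
(supremum of `|θ_{C_i}(τ)|` over `0 ≤ i < M`, `0 < τ < L`). -/
noncomputable def thetaA (L M : ℕ) (C : Fin M → ℕ → ℂ) : ℝ :=
  sSup {x : ℝ | ∃ i : Fin M, ∃ τ : ℕ, 0 < τ ∧ τ < L ∧ x = ‖pcc L (C i) (C i) τ‖}

/-- Maximum cross-correlation magnitude `θ_c` of a family of `M` sequences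
(supremum of `|θ_{C_i,C_j}(τ)|` over `i ≠ j`, `0 ≤ τ < L`); equals `0` when `M = 1`
since `sSup ∅ = 0` in `ℝ`. -/
noncomputable def thetaC (L M : ℕ) (C : Fin M → ℕ → ℂ) : ℝ :=
  sSup {x : ℝ | ∃ i j : Fin M, i ≠ j ∧ ∃ τ : ℕ, τ < L ∧ x = ‖pcc L (C i) (C j) τ‖}

/-- for an SCS family of `M` sequences of length `L` with `n` forbidden
carriers, `θ_a²·(L−1) + θ_c²·(M−1)·L ≥ L²(ML − L + n)/(L − n)`. -/
theorem stmt3 (L n M : ℕ) (hn : 0 < n) (hnL : n < L) (hL2 : 2 ≤ L) (hM : 1 ≤ M)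
    (Ω : Finset ℕ) (hΩsub : Ω ⊆ Finset.range L) (hΩcard : Ω.card = n)
    (C : Fin M → ℕ → ℂ)
    (h1 : ∀ i : Fin M, ∀ f ∈ Finset.range L, f ∉ Ω →
      ‖udft L (C i) f‖ ^ 2 = (L : ℝ) / ((L : ℝ) - (n : ℝ)))
    (h0 : ∀ i : Fin M, ∀ f ∈ Ω, udft L (C i) f = 0) :
    thetaA L M C ^ 2 * ((L : ℝ) - 1) + thetaC L M C ^ 2 * ((M : ℝ) - 1) * (L : ℝ) ≥
      (L : ℝ) ^ 2 * ((M : ℝ) * (L : ℝ) - (L : ℝ) + (n : ℝ)) / ((L : ℝ) - (n : ℝ)) := by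
  have hL0 : 0 < L := by omega
  have hnR : (n : ℝ) < (L : ℝ) := by exact_mod_cast hnL
  have hLn : (0:ℝ) < (L:ℝ) - n := by linarith
  have hLn' : (L:ℝ) - (n:ℝ) ≠ 0 := ne_of_gt hLn
  -- value of the spectral sums
  have hsum1 : ∀ i : Fin M, ∑ f ∈ Finset.range L, ‖udft L (C i) f‖ ^ 2 = (L:ℝ) := by
    intro i
    rw [← Finset.sum_sdiff hΩsub]
    have hΩ0 : ∑ f ∈ Ω, ‖udft L (C i) f‖ ^ 2 = 0 :=
      Finset.sum_eq_zero fun f hf => by rw [h0 i f hf]; simp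
    have hco : ∀ f ∈ Finset.range L \ Ω, ‖udft L (C i) f‖ ^ 2 = (L:ℝ)/((L:ℝ)-n) :=
      fun f hf => h1 i f (Finset.mem_sdiff.1 hf).1 (Finset.mem_sdiff.1 hf).2
    rw [hΩ0, add_zero, Finset.sum_congr rfl hco, Finset.sum_const,
      Finset.card_sdiff_of_subset hΩsub, Finset.card_range, hΩcard, nsmul_eq_mul,
      Nat.cast_sub hnL.le]
    field_simp
  have hsum2 : ∀ i j : Fin M, ∑ f ∈ Finset.range L,
      ‖udft L (C i) f‖ ^ 2 * ‖udft L (C j) f‖ ^ 2 = (L:ℝ)^2/((L:ℝ)-n) := by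
    intro i j
    rw [← Finset.sum_sdiff hΩsub]
    have hΩ0 : ∑ f ∈ Ω, ‖udft L (C i) f‖ ^ 2 * ‖udft L (C j) f‖ ^ 2 = 0 :=
      Finset.sum_eq_zero fun f hf => by rw [h0 i f hf]; simp
    have hco : ∀ f ∈ Finset.range L \ Ω,
        ‖udft L (C i) f‖ ^ 2 * ‖udft L (C j) f‖ ^ 2
          = ((L:ℝ)/((L:ℝ)-n)) * ((L:ℝ)/((L:ℝ)-n)) :=
      fun f hf => by
        rw [h1 i f (Finset.mem_sdiff.1 hf).1 (Finset.mem_sdiff.1 hf).2,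
          h1 j f (Finset.mem_sdiff.1 hf).1 (Finset.mem_sdiff.1 hf).2]
    rw [hΩ0, add_zero, Finset.sum_congr rfl hco, Finset.sum_const,
      Finset.card_sdiff_of_subset hΩsub, Finset.card_range, hΩcard, nsmul_eq_mul,
      Nat.cast_sub hnL.le]
    field_simp
  have hXval : ∀ i j : Fin M, ∑ τ ∈ Finset.range L, ‖pcc L (C i) (C j) τ‖ ^ 2
      = (L:ℝ)^3/((L:ℝ)-n) := by
    intro i j
    rw [sum_norm_pcc hL0, hsum2 i j]
    field_simp
  -- theta bounds
  have hbddA : BddAbove {x : ℝ | ∃ i : Fin M, ∃ τ : ℕ, 0 < τ ∧ τ < L ∧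
      x = ‖pcc L (C i) (C i) τ‖} := by
    apply Set.Finite.bddAbove
    apply (Set.finite_range (fun p : Fin M × Fin L => ‖pcc L (C p.1) (C p.1) (p.2 : ℕ)‖)).subset
    rintro x ⟨i, τ, hτ0, hτL, rfl⟩
    exact ⟨(i, ⟨τ, hτL⟩), rfl⟩
  have hθA : ∀ (i : Fin M) (τ : ℕ), 0 < τ → τ < L →
      ‖pcc L (C i) (C i) τ‖ ≤ thetaA L M C :=
    fun i τ ha hb => le_csSup hbddA ⟨i, τ, ha, hb, rfl⟩
  have hbddC : BddAbove {x : ℝ | ∃ i j : Fin M, i ≠ j ∧ ∃ τ : ℕ, τ < L ∧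
      x = ‖pcc L (C i) (C j) τ‖} := by
    apply Set.Finite.bddAbove
    apply (Set.finite_range (fun p : Fin M × Fin M × Fin L =>
      ‖pcc L (C p.1) (C p.2.1) (p.2.2 : ℕ)‖)).subset
    rintro x ⟨i, j, hij, τ, hτL, rfl⟩
    exact ⟨(i, j, ⟨τ, hτL⟩), rfl⟩
  have hθC : ∀ (i j : Fin M), i ≠ j → ∀ τ : ℕ, τ < L →
      ‖pcc L (C i) (C j) τ‖ ≤ thetaC L M C :=
    fun i j hij τ hb => le_csSup hbddC ⟨i, j, hij, τ, hb, rfl⟩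
  -- diagonal bound
  have hdiag : ∀ i : Fin M, ∑ τ ∈ Finset.range L, ‖pcc L (C i) (C i) τ‖ ^ 2
      ≤ (L:ℝ)^2 + ((L:ℝ)-1) * thetaA L M C ^ 2 := by
    intro i
    have hdec : ∑ τ ∈ Finset.range L, ‖pcc L (C i) (C i) τ‖ ^ 2
        = ‖pcc L (C i) (C i) 0‖ ^ 2 + ∑ τ ∈ Finset.Ico 1 L, ‖pcc L (C i) (C i) τ‖ ^ 2 := by
      rw [Finset.range_eq_Ico, Finset.sum_eq_sum_Ico_succ_bot hL0]
    have h00 : ‖pcc L (C i) (C i) 0‖ ^ 2 = (L:ℝ)^2 := by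
      rw [pcc_self_zero hL0, hsum1 i]
      simp [Complex.norm_real, abs_of_nonneg (Nat.cast_nonneg L : (0:ℝ) ≤ L)]
    have hside : ∑ τ ∈ Finset.Ico 1 L, ‖pcc L (C i) (C i) τ‖ ^ 2
        ≤ ((L:ℝ)-1) * thetaA L M C ^ 2 := by
      calc ∑ τ ∈ Finset.Ico 1 L, ‖pcc L (C i) (C i) τ‖ ^ 2
          ≤ ∑ _τ ∈ Finset.Ico 1 L, thetaA L M C ^ 2 :=
            Finset.sum_le_sum fun τ hτ => by
              have hm := Finset.mem_Ico.1 hτ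
              exact pow_le_pow_left₀ (norm_nonneg _) (hθA i τ hm.1 hm.2) 2
        _ = ((L:ℝ)-1) * thetaA L M C ^ 2 := by
            rw [Finset.sum_const, Nat.card_Ico, nsmul_eq_mul, Nat.cast_sub hL0,
              Nat.cast_one]
    rw [hdec, h00]
    linarith
  -- off-diagonal bound
  have hoff : ∀ i j : Fin M, i ≠ j → ∑ τ ∈ Finset.range L, ‖pcc L (C i) (C j) τ‖ ^ 2
      ≤ (L:ℝ) * thetaC L M C ^ 2 := by
    intro i j hij
    calc ∑ τ ∈ Finset.range L, ‖pcc L (C i) (C j) τ‖ ^ 2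
        ≤ ∑ _τ ∈ Finset.range L, thetaC L M C ^ 2 :=
          Finset.sum_le_sum fun τ hτ =>
            pow_le_pow_left₀ (norm_nonneg _) (hθC i j hij τ (Finset.mem_range.1 hτ)) 2
      _ = (L:ℝ) * thetaC L M C ^ 2 := by
          rw [Finset.sum_const, Finset.card_range, nsmul_eq_mul]
  -- assemble
  have hS : ∑ i : Fin M, ∑ j : Fin M, ∑ τ ∈ Finset.range L, ‖pcc L (C i) (C j) τ‖ ^ 2
      = (M:ℝ)^2 * ((L:ℝ)^3/((L:ℝ)-n)) := by
    rw [Finset.sum_congr rfl fun i _ => Finset.sum_congr rfl fun j _ => hXval i j]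
    simp [Finset.sum_const, Finset.card_univ]
    ring
  have hUB : ∑ i : Fin M, ∑ j : Fin M, ∑ τ ∈ Finset.range L, ‖pcc L (C i) (C j) τ‖ ^ 2
      ≤ (M:ℝ) * (((L:ℝ)^2 + ((L:ℝ)-1) * thetaA L M C ^ 2)
          + ((M:ℝ)-1) * ((L:ℝ) * thetaC L M C ^ 2)) := by
    calc ∑ i : Fin M, ∑ j : Fin M, ∑ τ ∈ Finset.range L, ‖pcc L (C i) (C j) τ‖ ^ 2
        ≤ ∑ _i : Fin M, (((L:ℝ)^2 + ((L:ℝ)-1) * thetaA L M C ^ 2)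
            + ((M:ℝ)-1) * ((L:ℝ) * thetaC L M C ^ 2)) := by
          refine Finset.sum_le_sum fun i _ => ?_
          rw [← Finset.sum_erase_add Finset.univ _ (Finset.mem_univ i)]
          have hcross : ∑ j ∈ Finset.univ.erase i,
              ∑ τ ∈ Finset.range L, ‖pcc L (C i) (C j) τ‖ ^ 2
              ≤ ((M:ℝ)-1) * ((L:ℝ) * thetaC L M C ^ 2) := by
            calc ∑ j ∈ Finset.univ.erase i,
                ∑ τ ∈ Finset.range L, ‖pcc L (C i) (C j) τ‖ ^ 2
                ≤ ∑ _j ∈ Finset.univ.erase i, (L:ℝ) * thetaC L M C ^ 2 :=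
                  Finset.sum_le_sum fun j hj =>
                    hoff i j (fun h => (Finset.ne_of_mem_erase hj) h.symm)
              _ = ((M:ℝ)-1) * ((L:ℝ) * thetaC L M C ^ 2) := by
                  rw [Finset.sum_const, Finset.card_erase_of_mem (Finset.mem_univ i),
                    Finset.card_univ, Fintype.card_fin, nsmul_eq_mul,
                    Nat.cast_sub hM, Nat.cast_one]
          linarith [hdiag i]
      _ = (M:ℝ) * (((L:ℝ)^2 + ((L:ℝ)-1) * thetaA L M C ^ 2)
            + ((M:ℝ)-1) * ((L:ℝ) * thetaC L M C ^ 2)) := by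
          rw [Finset.sum_const, Finset.card_univ, Fintype.card_fin, nsmul_eq_mul]
  rw [hS] at hUB
  have hM0 : (0:ℝ) < (M:ℝ) := by exact_mod_cast hM
  have key : (M:ℝ) * ((L:ℝ)^3/((L:ℝ)-n))
      ≤ ((L:ℝ)^2 + ((L:ℝ)-1) * thetaA L M C ^ 2)
          + ((M:ℝ)-1) * ((L:ℝ) * thetaC L M C ^ 2) := by
    have h := hUB
    rw [show (M:ℝ)^2 * ((L:ℝ)^3/((L:ℝ)-n)) = (M:ℝ) * ((M:ℝ) * ((L:ℝ)^3/((L:ℝ)-n)))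
      by ring] at h
    exact le_of_mul_le_mul_left h hM0
  have hrw : (L:ℝ)^2 * ((M:ℝ)*(L:ℝ) - (L:ℝ) + (n:ℝ))/((L:ℝ)-n)
      = (M:ℝ) * ((L:ℝ)^3/((L:ℝ)-n)) - (L:ℝ)^2 := by
    field_simp
    ring
  rw [ge_iff_le, hrw]
  linarith
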